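/- Let x_1,…,x_n be points in the closed unit ball of a separable Hilbert space H, let C_n := (1/n) Σ_{i=1}^n x_i ⊗ x_i, and for a closed subspace V of H let d_R(V) := (1/n) Σ_{i=1}^n ‖x_i − P_V(x_i)‖²_H. Then (i) d_R(V) = tr((I − P_V) C_n) for every closed subspace V, and (ii) for every k ≥ 1, among all linear subspaces V of H of dimension k, d_R(V) is minimized by the span of eigenvectors of C_n corresponding to its k largest eigenvalues. -/

import Mathlib

open MeasureTheory ContinuousLinearMap
open scoped ENNReal NNReal InnerProductSpace

noncomputable section

namespace SubspaceLearning

variable {H : Type*} [NormedAddCommGroup H] [InnerProductSpace ℂ H] [CompleteSpace H]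

/-- The rank-one operator `x ⊗ x : u ↦ ⟨x,u⟩ x`. -/
def rankOne (x : H) : H →L[ℂ] H := (innerSL ℂ x).smulRight x

/-- The (uncentered) covariance operator of a measure. -/
def covOp [MeasurableSpace H] (ρ : Measure H) : H →L[ℂ] H := ∫ x, rankOne x ∂ρ

/-- The empirical covariance operator of `n` sample points. -/
def empCov {n : ℕ} (x : Fin n → H) : H →L[ℂ] H := (n : ℂ)⁻¹ • ∑ i, rankOne (x i)

/-- The (topological) support of a measure. -/
def mSupport [MeasurableSpace H] (ρ : Measure H) : Set H :=
  {x : H | ∀ s : Set H, IsOpen s → x ∈ s → ρ s ≠ 0}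

/-- `S_ρ`: the closed linear span of the support of `ρ`. -/
def Sspan [MeasurableSpace H] (ρ : Measure H) : Submodule ℂ H :=
  (Submodule.span ℂ (mSupport ρ)).topologicalClosure

/-- Orthogonal projection onto (the closure of) a subspace, as an endomorphism of `H`. -/
def proj (U : Submodule ℂ H) : H →L[ℂ] H :=
  haveI : CompleteSpace U.topologicalClosure :=
    U.isClosed_topologicalClosure.completeSpace_coe
  U.topologicalClosure.subtypeL.comp (Submodule.orthogonalProjectionOnto U.topologicalClosure)

/-- `approxNum A k` : the `k`-th approximation number (`= (k+1)`-th largest singular value,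
for compact `A`); for a positive compact self-adjoint operator it is the `(k+1)`-th
largest eigenvalue (with multiplicity). -/
def approxNum (A : H →L[ℂ] H) (k : ℕ) : ℝ :=
  sInf ((fun F : H →L[ℂ] H => ‖A - F‖) ''
    {F | ∃ V : Submodule ℂ H, FiniteDimensional ℂ V ∧ Module.finrank ℂ V ≤ k ∧
      LinearMap.range (F : H →ₗ[ℂ] H) ≤ V})

/-- Schatten `p`-norm, `‖A‖_p = (∑ σ_k(A)^p)^{1/p}` (operator norm for `p = ∞`). -/
def schatten (p : ℝ≥0∞) (A : H →L[ℂ] H) : ℝ≥0∞ :=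
  if p = ∞ then ENNReal.ofReal ‖A‖
  else (∑' k : ℕ, ENNReal.ofReal (approxNum A k ^ p.toReal)) ^ p.toReal⁻¹

/-- `A^α` for a positive operator `A`, via the continuous functional calculus. -/
def opow (A : H →L[ℂ] H) (α : ℝ) : H →L[ℂ] H := cfc (fun s : ℝ => s ^ α) A

/-- `(A + t I)^α` for a positive operator `A`, via the continuous functional calculus. -/
def resPow (A : H →L[ℂ] H) (t α : ℝ) : H →L[ℂ] H := cfc (fun s : ℝ => (s + t) ^ α) A

/-- The distance `d_{α,p}(U,V) = ‖(P_U − P_V) C^α‖_p`. -/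
def dap (C : H →L[ℂ] H) (α : ℝ) (p : ℝ≥0∞) (U V : Submodule ℂ H) : ℝ≥0∞ :=
  schatten p ((proj U - proj V).comp (opow C α))

/-- `W` is the span of eigenvectors of `A` corresponding to its `k` largest
eigenvalues (with multiplicity). -/
def IsTopEigenSubspace (A : H →L[ℂ] H) (k : ℕ) (W : Submodule ℂ H) : Prop :=
  ∃ u : Fin k → H, Orthonormal ℂ u ∧
    (∀ i : Fin k, A (u i) = (approxNum A (i : ℕ) : ℂ) • u i) ∧
    W = Submodule.span ℂ (Set.range u)

/-- Löwner partial order: `A ⪯ B` iff `⟨f, A f⟩ ≤ ⟨f, B f⟩` for all `f`. -/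
def Loewner (A B : H →L[ℂ] H) : Prop :=
  ∀ f : H, (⟪f, A f⟫_ℂ).re ≤ (⟪f, B f⟫_ℂ).re

end SubspaceLearning

/-!
(i) Expanding in the Hilbert basis, `tr (B C_n) = n⁻¹ ∑ ⟪x_i, B x_i⟫` for every bounded `B`,
and `⟪x, (I - P_V) x⟫ = ‖x - P_V x‖²`.

(ii) As `‖x‖² = ‖P_V x‖² + ‖x - P_V x‖²`, the task is to maximise
`n⁻¹ ∑ ‖P_V x_i‖² = ∑ⱼ ⟪w_j, C_n w_j⟫`, where `w` is any orthonormal basis of `V`. On the top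
eigenspace this equals `∑_{j<k} approxNum C_n j`. For another `V`, take `F_j` of rank at most
`j` with `‖C_n - F_j‖ < approxNum C_n j + ε`; a dimension count, choosing the vectors from the
last one down, gives an orthonormal basis of `V` with `w_j ⊥ range F_j`, and then
`⟪w_j, C_n w_j⟫ = ⟪w_j, (C_n - F_j) w_j⟫ ≤ approxNum C_n j + ε`.
-/

namespace SubspaceLearning

open Submodule Set

theorem _root_.Complex.re_inv_natCast_mul (n : ℕ) (z : ℂ) :
    ((n : ℂ)⁻¹ * z).re = (n : ℝ)⁻¹ * z.re := by
  rw [← Complex.ofReal_natCast, ← Complex.ofReal_inv, Complex.re_ofReal_mul]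

variable {H : Type*} [NormedAddCommGroup H] [InnerProductSpace ℂ H]

theorem _root_.Orthonormal.snoc {k : ℕ} {w : Fin k → H} (hw : Orthonormal ℂ w) {z : H}
    (hz : ‖z‖ = 1) (hwz : ∀ j, ⟪w j, z⟫_ℂ = 0) :
    Orthonormal ℂ (Fin.snoc w z : Fin (k + 1) → H) := by
  classical
  rw [orthonormal_iff_ite] at hw ⊢
  intro i j
  induction i using Fin.lastCases <;> induction j using Fin.lastCases <;>
    simp [hw, hwz, inner_self_eq_norm_sq_to_K, hz, inner_eq_zero_symm.mp (hwz _),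
      Fin.castSucc_ne_last, (Fin.castSucc_ne_last _).symm]

theorem exists_mem_orthogonal_norm_eq_one {U V : Submodule ℂ H} [FiniteDimensional ℂ U]
    [FiniteDimensional ℂ V] (h : Module.finrank ℂ U < Module.finrank ℂ V) :
    ∃ z ∈ V, z ∈ Uᗮ ∧ ‖z‖ = 1 := by
  obtain ⟨v, hv, hv0⟩ := exists_mem_ne_zero_of_ne_bot <| LinearMap.ker_ne_bot_of_finrank_lt
    (f := U.orthogonalProjectionOnto.toLinearMap ∘ₗ V.subtype) h
  have hvU : (v : H) ∈ Uᗮ := orthogonalProjectionOnto_eq_zero_iff.mp hv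
  have hv0' : (v : H) ≠ 0 := by simpa using hv0
  exact ⟨(‖(v : H)‖⁻¹ : ℂ) • (v : H), V.smul_mem _ v.2, Uᗮ.smul_mem _ hvU,
    norm_smul_inv_norm hv0'⟩

theorem exists_orthonormal_mem_orthogonal (k : ℕ) (V : Submodule ℂ H) [FiniteDimensional ℂ V]
    (hk : k ≤ Module.finrank ℂ V) (R : Fin k → Submodule ℂ H) [∀ j, FiniteDimensional ℂ (R j)]
    (hR : ∀ j, Module.finrank ℂ (R j) ≤ j) :
    ∃ w : Fin k → H, Orthonormal ℂ w ∧ (∀ j, w j ∈ V) ∧ ∀ j, w j ∈ (R j)ᗮ := by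
  induction k generalizing V with
  | zero => exact ⟨Fin.elim0, ⟨fun j => j.elim0, fun {i} => i.elim0⟩, fun j => j.elim0,
      fun j => j.elim0⟩
  | succ k ih =>
    obtain ⟨z, hzV, hzR, hz⟩ := exists_mem_orthogonal_norm_eq_one (V := V) <|
      (hR (Fin.last k)).trans_lt (by simpa using hk)
    have hV' : k ≤ Module.finrank ℂ ((ℂ ∙ z)ᗮ ⊓ V : Submodule ℂ H) := by
      have hsplit := finrank_add_inf_finrank_orthogonal (span_singleton_le_iff_mem z V |>.mpr hzV)
      rw [finrank_span_singleton (norm_ne_zero_iff.mp (hz ▸ one_ne_zero))] at hsplit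
      omega
    obtain ⟨w, hw, hwV, hwR⟩ := ih _ hV' (fun j => R j.castSucc) fun j => hR j.castSucc
    have hwz : ∀ j, ⟪w j, z⟫_ℂ = 0 := fun j =>
      mem_orthogonal_singleton_iff_inner_left.mp (hwV j).1
    have hwV : ∀ j, w j ∈ V := fun j => (hwV j).2
    refine ⟨Fin.snoc w z, hw.snoc hz hwz, fun j => ?_, fun j => ?_⟩ <;>
      induction j using Fin.lastCases <;> simp [hzV, hzR, hwV, hwR]

theorem exists_norm_sub_lt_approxNum_add (A : H →L[ℂ] H) (k : ℕ) {ε : ℝ} (hε : 0 < ε) :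
    ∃ (F : H →L[ℂ] H) (R : Submodule ℂ H), FiniteDimensional ℂ R ∧ Module.finrank ℂ R ≤ k ∧
      LinearMap.range (F : H →ₗ[ℂ] H) ≤ R ∧ ‖A - F‖ < approxNum A k + ε := by
  have h0 : (0 : H →L[ℂ] H) ∈ {F : H →L[ℂ] H | ∃ R : Submodule ℂ H, FiniteDimensional ℂ R ∧
      Module.finrank ℂ R ≤ k ∧ LinearMap.range (F : H →ₗ[ℂ] H) ≤ R} :=
    ⟨⊥, inferInstance, by simp, by simp⟩
  obtain ⟨_, ⟨F, ⟨R, hR, hRk, hFR⟩, rfl⟩, hlt⟩ :=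
    Real.lt_sInf_add_pos (Set.Nonempty.image (fun F => ‖A - F‖) ⟨0, h0⟩) hε
  exact ⟨F, R, hR, hRk, hFR, hlt⟩

theorem re_inner_apply_le_norm_sub {A F : H →L[ℂ] H} {R : Submodule ℂ H}
    (hFR : LinearMap.range (F : H →ₗ[ℂ] H) ≤ R) {w : H} (hw : ‖w‖ = 1) (hwR : w ∈ Rᗮ) :
    (⟪w, A w⟫_ℂ).re ≤ ‖A - F‖ := by
  have hF : ⟪w, F w⟫_ℂ = 0 := inner_left_of_mem_orthogonal (hFR ⟨w, rfl⟩) hwR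
  calc (⟪w, A w⟫_ℂ).re = (⟪w, (A - F) w⟫_ℂ).re := by
        rw [sub_apply, inner_sub_right, hF, sub_zero]
    _ ≤ ‖w‖ * ‖(A - F) w‖ := re_inner_le_norm (𝕜 := ℂ) _ _
    _ ≤ ‖A - F‖ := by simpa [hw] using (A - F).le_opNorm w

theorem exists_orthonormal_span_eq_re_inner_le (A : H →L[ℂ] H) {k : ℕ} (V : Submodule ℂ H)
    [FiniteDimensional ℂ V] (hV : Module.finrank ℂ V = k) {ε : ℝ} (hε : 0 < ε) :
    ∃ w : Fin k → H, Orthonormal ℂ w ∧ span ℂ (range w) = V ∧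
      ∀ j, (⟪w j, A (w j)⟫_ℂ).re ≤ approxNum A j + ε := by
  choose F R hR hRk hFR hF using fun j : Fin k => exists_norm_sub_lt_approxNum_add A j hε
  obtain ⟨w, hw, hwV, hwR⟩ := exists_orthonormal_mem_orthogonal k V hV.ge R hRk
  refine ⟨w, hw, ?_, fun j => (re_inner_apply_le_norm_sub (hFR j) (hw.1 j) (hwR j)).trans
    (hF j).le⟩
  refine eq_of_le_of_finrank_eq (span_le.mpr (range_subset_iff.mpr hwV)) ?_
  rw [finrank_span_eq_card hw.linearIndependent, Fintype.card_fin, hV]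

section empCov

variable {n : ℕ} (x : Fin n → H)

theorem empCov_apply (f : H) : empCov x f = (n : ℂ)⁻¹ • ∑ i, ⟪x i, f⟫_ℂ • x i := by
  simp [empCov, rankOne]

theorem re_inner_empCov_apply (f : H) :
    (⟪f, empCov x f⟫_ℂ).re = (n : ℝ)⁻¹ * ∑ i, ‖⟪x i, f⟫_ℂ‖ ^ 2 := by
  have hterm : ∀ i, ⟪f, ⟪x i, f⟫_ℂ • x i⟫_ℂ = ((‖⟪x i, f⟫_ℂ‖ ^ 2 : ℝ) : ℂ) := fun i => by
    rw [inner_smul_right, ← inner_conj_symm f (x i), RCLike.mul_conj]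
    norm_cast
  rw [empCov_apply, inner_smul_right, inner_sum, Finset.sum_congr rfl fun i _ => hterm i,
    Complex.re_inv_natCast_mul, ← Complex.ofReal_sum, Complex.ofReal_re]

theorem hasSum_inner_comp_empCov {ι : Type*} (b : HilbertBasis ι ℂ H) (B : H →L[ℂ] H) :
    HasSum (fun j => ⟪b j, (B.comp (empCov x)) (b j)⟫_ℂ)
      ((n : ℂ)⁻¹ * ∑ i, ⟪x i, B (x i)⟫_ℂ) := by
  have hterm : ∀ j, ⟪b j, (B.comp (empCov x)) (b j)⟫_ℂ =
      (n : ℂ)⁻¹ * ∑ i, ⟪x i, b j⟫_ℂ * ⟪b j, B (x i)⟫_ℂ := fun j => by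
    simp [empCov_apply]
  simp only [hterm]
  exact (hasSum_sum fun i _ => b.hasSum_inner_mul_inner (x i) (B (x i))).mul_left _

end empCov

variable [CompleteSpace H]

instance (U : Submodule ℂ H) : CompleteSpace U.topologicalClosure :=
  U.isClosed_topologicalClosure.completeSpace_coe

theorem proj_eq_starProjection (U : Submodule ℂ H) :
    proj U = U.topologicalClosure.starProjection := rfl

theorem norm_sub_proj_sq (U : Submodule ℂ H) (y : H) :
    ‖y - proj U y‖ ^ 2 = ‖y‖ ^ 2 - ‖proj U y‖ ^ 2 := by
  rw [proj_eq_starProjection, ← starProjection_orthogonal_val,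
    norm_sq_eq_add_norm_sq_starProjection y U.topologicalClosure]
  ring

theorem re_inner_sub_proj (U : Submodule ℂ H) (y : H) :
    (⟪y, y - proj U y⟫_ℂ).re = ‖y - proj U y‖ ^ 2 := by
  have hperp : ⟪proj U y, y - proj U y⟫_ℂ = 0 := by
    rw [inner_eq_zero_symm, proj_eq_starProjection]
    exact starProjection_inner_eq_zero y _ (coe_mem _)
  calc (⟪y, y - proj U y⟫_ℂ).re = (⟪proj U y + (y - proj U y), y - proj U y⟫_ℂ).re := by
        rw [add_sub_cancel]
    _ = ‖y - proj U y‖ ^ 2 := by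
        rw [inner_add_left, hperp, zero_add]
        exact inner_self_eq_norm_sq (𝕜 := ℂ) _

theorem proj_span_orthonormal {k : ℕ} {w : Fin k → H} (hw : Orthonormal ℂ w) (y : H) :
    proj (span ℂ (range w)) y = ∑ j, ⟪w j, y⟫_ℂ • w j := by
  have : FiniteDimensional ℂ (span ℂ (range w)) := .span_of_finite ℂ (finite_range w)
  have hclosed : (span ℂ (range w)).topologicalClosure = span ℂ (range w) :=
    (span ℂ (range w)).closed_of_finiteDimensional.submodule_topologicalClosure_eq
  rw [proj_eq_starProjection]
  refine eq_starProjection_of_mem_of_inner_eq_zero ?_ fun z hz => ?_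
  · rw [hclosed]
    exact sum_mem fun j _ => smul_mem _ _ (subset_span (mem_range_self j))
  · have hspan : span ℂ (range w) ≤ (ℂ ∙ (y - ∑ j, ⟪w j, y⟫_ℂ • w j))ᗮ := by
      refine span_le.mpr ?_
      rintro _ ⟨i, rfl⟩
      rw [SetLike.mem_coe, mem_orthogonal_singleton_iff_inner_left,
        inner_sub_right, hw.inner_right_fintype, sub_self]
    rw [hclosed] at hz
    exact mem_orthogonal_singleton_iff_inner_right.mp (hspan hz)

theorem norm_proj_span_orthonormal_sq {k : ℕ} {w : Fin k → H} (hw : Orthonormal ℂ w) (y : H) :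
    ‖proj (span ℂ (range w)) y‖ ^ 2 = ∑ j, ‖⟪w j, y⟫_ℂ‖ ^ 2 := by
  rw [proj_span_orthonormal hw, ← inner_self_eq_norm_sq (𝕜 := ℂ), hw.inner_sum, map_sum]
  refine Finset.sum_congr rfl fun j _ => ?_
  rw [RCLike.conj_mul]
  norm_cast

section sample

variable {n : ℕ} (x : Fin n → H)

theorem hasSum_re_inner_comp_empCov_sub_proj {ι : Type*} (b : HilbertBasis ι ℂ H)
    (U : Submodule ℂ H) :
    HasSum (fun j => (⟪b j, ((1 - proj U).comp (empCov x)) (b j)⟫_ℂ).re)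
      ((n : ℝ)⁻¹ * ∑ i, ‖x i - proj U (x i)‖ ^ 2) := by
  convert Complex.hasSum_re (hasSum_inner_comp_empCov x b (1 - proj U)) using 1
  simp only [Complex.re_inv_natCast_mul, Complex.re_sum, sub_apply,
    one_apply_eq_self, re_inner_sub_proj]

theorem mean_sq_norm_sub_proj (U : Submodule ℂ H) :
    (n : ℝ)⁻¹ * ∑ i, ‖x i - proj U (x i)‖ ^ 2 =
      (n : ℝ)⁻¹ * ∑ i, ‖x i‖ ^ 2 - (n : ℝ)⁻¹ * ∑ i, ‖proj U (x i)‖ ^ 2 := by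
  simp only [norm_sub_proj_sq, Finset.sum_sub_distrib, mul_sub]

theorem mean_sq_norm_proj_span_orthonormal {k : ℕ} {w : Fin k → H} (hw : Orthonormal ℂ w) :
    (n : ℝ)⁻¹ * ∑ i, ‖proj (span ℂ (range w)) (x i)‖ ^ 2 =
      ∑ j, (⟪w j, empCov x (w j)⟫_ℂ).re := by
  simp only [norm_proj_span_orthonormal_sq hw, re_inner_empCov_apply, norm_inner_symm (w _)]
  rw [Finset.sum_comm, Finset.mul_sum]

theorem mean_sq_norm_proj_le_sum_approxNum {k : ℕ} (V : Submodule ℂ H) [FiniteDimensional ℂ V]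
    (hV : Module.finrank ℂ V = k) :
    (n : ℝ)⁻¹ * ∑ i, ‖proj V (x i)‖ ^ 2 ≤ ∑ j : Fin k, approxNum (empCov x) j := by
  refine le_of_forall_pos_le_add fun δ hδ => ?_
  have hk : (0 : ℝ) < k + 1 := k.cast_add_one_pos
  obtain ⟨w, hw, rfl, hwA⟩ :=
    exists_orthonormal_span_eq_re_inner_le (empCov x) V hV (div_pos hδ hk)
  calc (n : ℝ)⁻¹ * ∑ i, ‖proj (span ℂ (range w)) (x i)‖ ^ 2
      = ∑ j, (⟪w j, empCov x (w j)⟫_ℂ).re := mean_sq_norm_proj_span_orthonormal x hw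
    _ ≤ ∑ j : Fin k, (approxNum (empCov x) j + δ / (k + 1)) := Finset.sum_le_sum fun j _ => hwA j
    _ = ∑ j : Fin k, approxNum (empCov x) j + k / (k + 1) * δ := by
        rw [Finset.sum_add_distrib, Finset.sum_const, Finset.card_univ, Fintype.card_fin,
          nsmul_eq_mul]
        ring
    _ ≤ ∑ j : Fin k, approxNum (empCov x) j + δ := by
        gcongr
        exact mul_le_of_le_one_left hδ.le ((div_le_one hk).mpr (by linarith))

theorem mean_sq_norm_proj_eq_sum_approxNum {k : ℕ} {W : Submodule ℂ H}
    (hW : IsTopEigenSubspace (empCov x) k W) :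
    (n : ℝ)⁻¹ * ∑ i, ‖proj W (x i)‖ ^ 2 = ∑ j : Fin k, approxNum (empCov x) j := by
  obtain ⟨u, hu, hAu, rfl⟩ := hW
  rw [mean_sq_norm_proj_span_orthonormal x hu]
  refine Finset.sum_congr rfl fun j _ => ?_
  rw [hAu j, inner_smul_right, inner_self_eq_norm_sq_to_K, hu.1 j]
  simp

end sample

theorem statement19_general {n : ℕ} (x : Fin n → H) :
    (∀ V : Submodule ℂ H, IsClosed (V : Set H) → ∀ (ι : Type) (b : HilbertBasis ι ℂ H),
        (n : ℝ)⁻¹ * ∑ i, ‖x i - proj V (x i)‖ ^ 2 =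
          ∑' j, (⟪b j, ((1 - proj V).comp (empCov x)) (b j)⟫_ℂ).re) ∧
    (∀ k : ℕ, 1 ≤ k → ∀ W : Submodule ℂ H, IsTopEigenSubspace (empCov x) k W →
        ∀ V : Submodule ℂ H, FiniteDimensional ℂ V → Module.finrank ℂ V = k →
          (n : ℝ)⁻¹ * ∑ i, ‖x i - proj W (x i)‖ ^ 2 ≤
            (n : ℝ)⁻¹ * ∑ i, ‖x i - proj V (x i)‖ ^ 2) := by
  refine ⟨fun V _ ι b => (hasSum_re_inner_comp_empCov_sub_proj x b V).tsum_eq.symm, ?_⟩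
  intro k _ W hW V _ hV
  rw [mean_sq_norm_sub_proj, mean_sq_norm_sub_proj, mean_sq_norm_proj_eq_sum_approxNum x hW]
  linarith [mean_sq_norm_proj_le_sum_approxNum x V hV]

theorem statement19 {n : ℕ} (hn : 0 < n) (x : Fin n → H) (hx : ∀ i, ‖x i‖ ≤ 1) :
    (∀ V : Submodule ℂ H, IsClosed (V : Set H) → ∀ (ι : Type) (b : HilbertBasis ι ℂ H),
        (n : ℝ)⁻¹ * ∑ i, ‖x i - proj V (x i)‖ ^ 2 =
          ∑' j, (⟪b j, ((1 - proj V).comp (empCov x)) (b j)⟫_ℂ).re) ∧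
    (∀ k : ℕ, 1 ≤ k → ∀ W : Submodule ℂ H, IsTopEigenSubspace (empCov x) k W →
        ∀ V : Submodule ℂ H, FiniteDimensional ℂ V → Module.finrank ℂ V = k →
          (n : ℝ)⁻¹ * ∑ i, ‖x i - proj W (x i)‖ ^ 2 ≤
            (n : ℝ)⁻¹ * ∑ i, ‖x i - proj V (x i)‖ ^ 2) :=
  statement19_general x

end SubspaceLearning
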